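/- arXiv:2308.05004 — 3 statements merged into one kernel-verified Lean document; each statement's English description precedes it below -/
import Mathlib

section
/- Let X, Y be Banach spaces and H0 a separable Hilbert space continuously embedded and dense in X. If φ : X → Y is continuous, H0-Fréchet differentiable, and D_{H0}φ(x) = 0 for every x ∈ X, then φ is constant. -/
/-!
Fix `x`. The hypothesis at the point `x + ι h` says exactly that `h ↦ φ (x + ι h)` has Fréchet
derivative `0` at `h`, so this map is constant on `H₀` by the mean value theorem. Hence `φ`
is constant on the dense affine subspace `x + ι H₀`, and by continuity on all of `X`.
-/

open Filter Topology

theorem hasFDerivAt_iff_tendsto_norm_div {𝕜 E F : Type*} [NontriviallyNormedField 𝕜]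
    [NormedAddCommGroup E] [NormedSpace 𝕜 E] [NormedAddCommGroup F] [NormedSpace 𝕜 F]
    {f : E → F} {f' : E →L[𝕜] F} {x : E} :
    HasFDerivAt f f' x ↔
      Tendsto (fun h : E => ‖f (x + h) - f x - f' h‖ / ‖h‖) (𝓝 0) (𝓝 0) := by
  rw [hasFDerivAt_iff_isLittleO_nhds_zero, ← Asymptotics.isLittleO_norm_norm,
    Asymptotics.isLittleO_iff_tendsto]
  intro h h0
  simp [norm_eq_zero.mp h0]

section AlongSubspace

variable {𝕜 E X Y : Type*} [NontriviallyNormedField 𝕜] [NormedAddCommGroup E] [NormedSpace 𝕜 E]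
  [NormedAddCommGroup X] [NormedSpace 𝕜 X] [NormedAddCommGroup Y] [NormedSpace 𝕜 Y]
  {ι : E →L[𝕜] X} {φ : X → Y}

theorem hasFDerivAt_zero_comp_affine
    (hF : ∀ x : X, HasFDerivAt (fun h : E => φ (x + ι h)) (0 : E →L[𝕜] Y) 0) (x : X) (h : E) :
    HasFDerivAt (fun k : E => φ (x + ι k)) (0 : E →L[𝕜] Y) h := by
  have hx := hasFDerivAt_iff_isLittleO_nhds_zero.mp (hF (x + ι h))
  refine hasFDerivAt_iff_isLittleO_nhds_zero.mpr ?_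
  simpa only [map_add, map_zero, zero_add, add_zero, add_assoc] using hx

theorem apply_add_eq_of_forall_hasFDerivAt_zero [IsRCLikeNormedField 𝕜]
    (hF : ∀ x : X, HasFDerivAt (fun h : E => φ (x + ι h)) (0 : E →L[𝕜] Y) 0) (x : X) (h : E) :
    φ (x + ι h) = φ x := by
  have hderiv := hasFDerivAt_zero_comp_affine hF x
  simpa using is_const_of_fderiv_eq_zero (fun k => (hderiv k).differentiableAt)
    (fun k => (hderiv k).fderiv) h 0

end AlongSubspace

theorem eq_of_denseRange_of_apply_add_eq {X Y E : Type*} [AddGroup X] [TopologicalSpace X]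
    [ContinuousAdd X] [TopologicalSpace Y] [T2Space Y] {ι : E → X} (hdense : DenseRange ι)
    {φ : X → Y} (hφ : Continuous φ) (hconst : ∀ x h, φ (x + ι h) = φ x) (x y : X) :
    φ x = φ y := by
  have hline : (fun z => φ (x + z)) = fun _ => φ x :=
    Continuous.ext_on hdense (hφ.comp (continuous_const.add continuous_id)) continuous_const
      (by rintro _ ⟨h, rfl⟩; exact hconst x h)
  simpa using (congrFun hline (-x + y)).symm

theorem statement3_general
    {X Y H0 : Type*} [NormedAddCommGroup X] [NormedSpace ℝ X]
    [NormedAddCommGroup Y] [NormedSpace ℝ Y]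
    [NormedAddCommGroup H0] [InnerProductSpace ℝ H0]
    (ι : H0 →L[ℝ] X) (hdense : DenseRange ι)
    (φ : X → Y) (hφ : Continuous φ)
    (hF : ∀ x : X,
      Tendsto (fun h : H0 => ‖φ (x + ι h) - φ x - (0 : H0 →L[ℝ] Y) h‖ / ‖h‖) (𝓝 0) (𝓝 0)) :
    ∀ x y : X, φ x = φ y := by
  have hderiv (x : X) : HasFDerivAt (fun h : H0 => φ (x + ι h)) (0 : H0 →L[ℝ] Y) 0 :=
    hasFDerivAt_iff_tendsto_norm_div.mpr (by simpa only [zero_add, add_zero, map_zero] using hF x)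
  exact eq_of_denseRange_of_apply_add_eq hdense hφ
    (apply_add_eq_of_forall_hasFDerivAt_zero hderiv)

/-- If `H₀` is continuously embedded and dense in `X` (`ι` has dense range),
`φ : X → Y` is continuous, `H₀`-Fréchet differentiable, and `D_{H₀}φ(x) = 0` for every `x`,
then `φ` is constant. -/
theorem statement3
    {X Y H0 : Type*} [NormedAddCommGroup X] [NormedSpace ℝ X] [CompleteSpace X]
    [NormedAddCommGroup Y] [NormedSpace ℝ Y] [CompleteSpace Y]
    [NormedAddCommGroup H0] [InnerProductSpace ℝ H0] [CompleteSpace H0]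
    [TopologicalSpace.SeparableSpace H0]
    (ι : H0 →L[ℝ] X) (hι : Function.Injective ι) (hdense : DenseRange ι)
    (φ : X → Y) (hφ : Continuous φ)
    (hF : ∀ x : X,
      Tendsto (fun h : H0 => ‖φ (x + ι h) - φ x - (0 : H0 →L[ℝ] Y) h‖ / ‖h‖) (𝓝 0) (𝓝 0)) :
    ∀ x y : X, φ x = φ y :=
  statement3_general ι hdense φ hφ hF
end

section
/- Let H be a separable Hilbert space and R ∈ L(H) self-adjoint with pseudo-inverse R⁻¹. A function φ : H → ℝ is R-differentiable at x if and only if it is H_R-Gateaux differentiable at x, and in that case ⟨∇_{G,H_R}φ(x), h⟩_{H_R} = ⟨R∇_Rφ(x), h⟩_{H_R} for all h ∈ H_R, equivalently ⟨∇_Rφ(x), v⟩_H = ⟨R⁻¹∇_{G,H_R}φ(x), v⟩_H for all v ∈ H. In particular ‖∇_Rφ(x)‖_H = ‖∇_{G,H_R}φ(x)‖_{H_R}. -/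
open Filter Topology RealInnerProductSpace

/-! Substituting `h = R v` identifies the directions of `H_R` with those of the `R`-derivative.
For `l ⊥ ker R` the pseudo-inverse is invisible, `⟪l, Rinv (R v)⟫ = ⟪l, v⟫`, so with `g = R l`,
equivalently `l = Rinv g`, the two difference quotients have the same limits. -/

section PseudoInverse

variable {𝕜 E F : Type*} [RCLike 𝕜] [NormedAddCommGroup E] [InnerProductSpace 𝕜 E]
  [AddCommGroup F] [Module 𝕜 F] {f : E →ₗ[𝕜] F}

theorem inner_eq_inner_of_mem_orthogonal_ker {l a b : E} (hl : l ∈ (LinearMap.ker f)ᗮ)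
    (h : f a = f b) : inner 𝕜 l a = inner 𝕜 l b := by
  have h0 : inner 𝕜 l (a - b) = 0 :=
    Submodule.inner_left_of_mem_orthogonal (LinearMap.sub_mem_ker_iff.2 h) hl
  rwa [inner_sub_right, sub_eq_zero] at h0

theorem eq_of_mem_orthogonal_ker {a b : E} (ha : a ∈ (LinearMap.ker f)ᗮ)
    (hb : b ∈ (LinearMap.ker f)ᗮ) (h : f a = f b) : a = b :=
  sub_eq_zero.1 <| Submodule.disjoint_def.1 (LinearMap.ker f).orthogonal_disjoint _
    (LinearMap.sub_mem_ker_iff.2 h) (Submodule.sub_mem _ ha hb)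

end PseudoInverse

theorem statement7_general
    {H : Type*} [NormedAddCommGroup H] [InnerProductSpace ℝ H]
    (R : H →L[ℝ] H)
    (Rinv : H → H)
    (hRinv1 : ∀ y ∈ LinearMap.range (R : H →ₗ[ℝ] H), R (Rinv y) = y)
    (hRinv2 : ∀ y ∈ LinearMap.range (R : H →ₗ[ℝ] H), Rinv y ∈ (LinearMap.ker (R : H →ₗ[ℝ] H))ᗮ)
    (φ : H → ℝ) (x : H) :
    ((∃ l ∈ (LinearMap.ker (R : H →ₗ[ℝ] H))ᗮ, ∀ v : H,
        Tendsto (fun s : ℝ => s⁻¹ * (φ (x + s • R v) - φ x)) (𝓝[≠] 0) (𝓝 ⟪l, v⟫)) ↔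
      (∃ g ∈ LinearMap.range (R : H →ₗ[ℝ] H), ∀ h ∈ LinearMap.range (R : H →ₗ[ℝ] H),
        Tendsto (fun s : ℝ => s⁻¹ * (φ (x + s • h) - φ x)) (𝓝[≠] 0) (𝓝 ⟪Rinv g, Rinv h⟫)))
    ∧
    (∀ l g : H, l ∈ (LinearMap.ker (R : H →ₗ[ℝ] H))ᗮ → g ∈ LinearMap.range (R : H →ₗ[ℝ] H) →
      (∀ v : H,
        Tendsto (fun s : ℝ => s⁻¹ * (φ (x + s • R v) - φ x)) (𝓝[≠] 0) (𝓝 ⟪l, v⟫)) →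
      (∀ h ∈ LinearMap.range (R : H →ₗ[ℝ] H),
        Tendsto (fun s : ℝ => s⁻¹ * (φ (x + s • h) - φ x)) (𝓝[≠] 0) (𝓝 ⟪Rinv g, Rinv h⟫)) →
      (∀ v : H, ⟪l, v⟫ = ⟪Rinv g, v⟫) ∧ ‖l‖ = ‖Rinv g‖) := by
  have hRRinv (v : H) : R (Rinv (R v)) = R v := hRinv1 (R v) ⟨v, rfl⟩
  have inner_Rinv_R {l : H} (hl : l ∈ (LinearMap.ker (R : H →ₗ[ℝ] H))ᗮ) (v : H) :
      ⟪l, Rinv (R v)⟫ = ⟪l, v⟫ :=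
    inner_eq_inner_of_mem_orthogonal_ker (f := (R : H →ₗ[ℝ] H)) hl (hRRinv v)
  refine ⟨⟨?_, ?_⟩, ?_⟩
  · rintro ⟨l, hl, hder⟩
    have hl' : Rinv (R l) = l :=
      eq_of_mem_orthogonal_ker (f := (R : H →ₗ[ℝ] H)) (hRinv2 _ ⟨l, rfl⟩) hl (hRRinv l)
    refine ⟨R l, ⟨l, rfl⟩, ?_⟩
    rintro _ ⟨v, rfl⟩
    simpa only [ContinuousLinearMap.coe_coe, hl', inner_Rinv_R hl] using hder v
  · rintro ⟨g, hg, hder⟩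
    refine ⟨Rinv g, hRinv2 g hg, fun v => ?_⟩
    simpa only [ContinuousLinearMap.coe_coe, inner_Rinv_R (hRinv2 g hg)] using hder (R v) ⟨v, rfl⟩
  · intro l g _ hg hderR hderG
    have heq (v : H) : ⟪l, v⟫ = ⟪Rinv g, v⟫ := by
      refine tendsto_nhds_unique (hderR v) ?_
      simpa only [ContinuousLinearMap.coe_coe, inner_Rinv_R (hRinv2 g hg)] using
        hderG (R v) ⟨v, rfl⟩
    exact ⟨heq, by rw [ext_inner_right ℝ heq]⟩

/-- `φ : H → ℝ` is `R`-differentiable at `x` (with gradient in `(ker R)ᗮ`)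
if and only if it is `H_R`-Gateaux differentiable at `x` (with gradient `g ∈ H_R = R(H)`,
the derivative along `h ∈ H_R` being `⟪Rinv g, Rinv h⟫`, the `H_R` inner product).
Moreover the gradients `l = ∇_R φ(x)` and `g = ∇_{G,H_R} φ(x)` are related by
`⟪l, v⟫ = ⟪Rinv g, v⟫` for all `v ∈ H`, and `‖l‖_H = ‖Rinv g‖_H = ‖g‖_{H_R}`. -/
theorem statement7
    {H : Type*} [NormedAddCommGroup H] [InnerProductSpace ℝ H] [CompleteSpace H]
    [TopologicalSpace.SeparableSpace H]
    (R : H →L[ℝ] H) (hR : IsSelfAdjoint R)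
    (Rinv : H → H)
    (hRinv1 : ∀ y ∈ LinearMap.range (R : H →ₗ[ℝ] H), R (Rinv y) = y)
    (hRinv2 : ∀ y ∈ LinearMap.range (R : H →ₗ[ℝ] H), Rinv y ∈ (LinearMap.ker (R : H →ₗ[ℝ] H))ᗮ)
    (φ : H → ℝ) (x : H) :
    ((∃ l ∈ (LinearMap.ker (R : H →ₗ[ℝ] H))ᗮ, ∀ v : H,
        Tendsto (fun s : ℝ => s⁻¹ * (φ (x + s • R v) - φ x)) (𝓝[≠] 0) (𝓝 ⟪l, v⟫)) ↔
      (∃ g ∈ LinearMap.range (R : H →ₗ[ℝ] H), ∀ h ∈ LinearMap.range (R : H →ₗ[ℝ] H),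
        Tendsto (fun s : ℝ => s⁻¹ * (φ (x + s • h) - φ x)) (𝓝[≠] 0) (𝓝 ⟪Rinv g, Rinv h⟫)))
    ∧
    (∀ l g : H, l ∈ (LinearMap.ker (R : H →ₗ[ℝ] H))ᗮ → g ∈ LinearMap.range (R : H →ₗ[ℝ] H) →
      (∀ v : H,
        Tendsto (fun s : ℝ => s⁻¹ * (φ (x + s • R v) - φ x)) (𝓝[≠] 0) (𝓝 ⟪l, v⟫)) →
      (∀ h ∈ LinearMap.range (R : H →ₗ[ℝ] H),
        Tendsto (fun s : ℝ => s⁻¹ * (φ (x + s • h) - φ x)) (𝓝[≠] 0) (𝓝 ⟪Rinv g, Rinv h⟫)) →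
      (∀ v : H, ⟪l, v⟫ = ⟪Rinv g, v⟫) ∧ ‖l‖ = ‖Rinv g‖) :=
  statement7_general R Rinv hRinv1 hRinv2 φ x
end

section
/- Let H be a separable Hilbert space and R ∈ L(H) self-adjoint. For α ∈ (0,1), the real interpolation space (BUC(H), Lip_{b,R}(H))_{α,∞} (K-method) coincides, with equivalent norms, with the space BUC^α_R(H) of bounded uniformly continuous functions that are R-Hölder of exponent α. -/
open Filter Topology RealInnerProductSpace

section Defs

variable {H : Type*} [NormedAddCommGroup H] [InnerProductSpace ℝ H]

/-- Sup norm `‖f‖_∞` (as a real supremum of the set of values `|f x|`). -/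
noncomputable def supNorm (f : H → ℝ) : ℝ :=
  sSup {r : ℝ | ∃ x : H, r = |f x|}

/-- `f` is bounded and uniformly continuous, i.e. `f ∈ BUC(H)`. -/
def IsBUC (f : H → ℝ) : Prop :=
  (∃ C : ℝ, ∀ x, |f x| ≤ C) ∧ UniformContinuous f

/-- The `R`-Lipschitz seminorm `[f]_R = sup_{x, v ≠ 0} |f(x+Rv) − f(x)| / ‖v‖`. -/
noncomputable def lipSeminormR (R : H →L[ℝ] H) (f : H → ℝ) : ℝ :=
  sSup {r : ℝ | ∃ x v : H, v ≠ 0 ∧ r = |f (x + R v) - f x| / ‖v‖}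

/-- `f ∈ Lip_{b,R}(H)`: bounded, uniformly continuous and `R`-Lipschitz. -/
def IsLipbR (R : H →L[ℝ] H) (f : H → ℝ) : Prop :=
  IsBUC f ∧ ∃ L : ℝ, ∀ x v : H, |f (x + R v) - f x| ≤ L * ‖v‖

/-- The `R`-Hölder seminorm `[f]_{R,α} = sup_{x, v ≠ 0} |f(x+Rv) − f(x)| / ‖v‖^α`. -/
noncomputable def holderSeminormR (R : H →L[ℝ] H) (α : ℝ) (f : H → ℝ) : ℝ :=
  sSup {r : ℝ | ∃ x v : H, v ≠ 0 ∧ r = |f (x + R v) - f x| / ‖v‖ ^ α}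

/-- The `K`-functional for the couple `(BUC(H), Lip_{b,R}(H))`:
`K(r,f) = inf { ‖a‖_∞ + r ‖b‖_{Lip_{b,R}} : f = a + b, a ∈ BUC, b ∈ Lip_{b,R} }`. -/
noncomputable def Kfunctional (R : H →L[ℝ] H) (r : ℝ) (f : H → ℝ) : ℝ :=
  sInf {s : ℝ | ∃ a b : H → ℝ, (∀ x, f x = a x + b x) ∧ IsBUC a ∧ IsLipbR R b ∧
    s = supNorm a + r * (supNorm b + lipSeminormR R b)}

/-- The norm of the real interpolation space `(BUC(H), Lip_{b,R}(H))_{α,∞}`: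
`sup_{r > 0} r^{−α} K(r,f)`. -/
noncomputable def interpNorm (R : H →L[ℝ] H) (α : ℝ) (f : H → ℝ) : ℝ :=
  sSup {s : ℝ | ∃ r : ℝ, 0 < r ∧ s = r ^ (-α) * Kfunctional R r f}

end Defs

/-!
For `r ≥ 1` the trivial splitting `f = f + 0` gives `K(r,f) ≤ ‖f‖_∞ ≤ r^α ‖f‖_∞`. For `r < 1`
an `α`-Hölder `f` with constant `L` is split as `f = (f - b) + b`, where
`b x = inf_v (f (x + R v) + L r^(α-1) ‖v‖)` is an inf-convolution along the range of `R`: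
`b` is bounded by `‖f‖_∞` and `R`-Lipschitz with constant `L r^(α-1)`, and
`0 ≤ f - b ≤ L r^α` by Young's inequality `s^α ≤ r^α + r^(α-1) s`, so
`K(r,f) ≤ r^α (‖f‖_∞ + 2L)`. Conversely, splitting `f(x+Rv) - f(x)` along any decomposition
`f = a + b` bounds it by `2 K(‖v‖, f)`, hence by `2 ‖v‖^α ‖f‖_{α,∞}`, and `‖f‖_∞ ≤ K(1,f)`.
-/

lemma Real.rpow_le_rpow_add_rpow_sub_one_mul {α r s : ℝ} (hα₀ : 0 ≤ α) (hα₁ : α ≤ 1)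
    (hr : 0 < r) (hs : 0 ≤ s) : s ^ α ≤ r ^ α + r ^ (α - 1) * s := by
  rcases le_total s r with hsr | hrs
  · have := Real.rpow_le_rpow hs hsr hα₀
    nlinarith [mul_nonneg (Real.rpow_nonneg hr.le (α - 1)) hs]
  · have hs₀ : 0 < s := hr.trans_le hrs
    have hsα : s ^ α = s ^ (α - 1) * s := by
      rw [Real.rpow_sub_one hs₀.ne', div_mul_cancel₀ _ hs₀.ne']
    have := Real.rpow_le_rpow_of_nonpos hr hrs (by linarith : α - 1 ≤ 0)
    nlinarith [Real.rpow_nonneg hr.le α]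

section InfConvolution

variable {H : Type*} [NormedAddCommGroup H] [NormedSpace ℝ H]
  (R : H →L[ℝ] H) (t : ℝ) (f : H → ℝ)

noncomputable def infConvR (x : H) : ℝ :=
  ⨅ v : H, f (x + R v) + t * ‖v‖

variable {t f}

lemma bddBelow_range_infConvR (hf : BddBelow (Set.range f)) (ht : 0 ≤ t) (x : H) :
    BddBelow (Set.range fun v : H => f (x + R v) + t * ‖v‖) := by
  obtain ⟨m, hm⟩ := hf
  refine ⟨m, ?_⟩
  rintro _ ⟨v, rfl⟩
  have := hm ⟨x + R v, rfl⟩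
  nlinarith [norm_nonneg v]

lemma infConvR_le (hf : BddBelow (Set.range f)) (ht : 0 ≤ t) (x v : H) :
    infConvR R t f x ≤ f (x + R v) + t * ‖v‖ :=
  ciInf_le (bddBelow_range_infConvR R hf ht x) v

lemma infConvR_le_self (hf : BddBelow (Set.range f)) (ht : 0 ≤ t) (x : H) :
    infConvR R t f x ≤ f x := by
  simpa using infConvR_le R hf ht x 0

lemma le_infConvR {x : H} {c : ℝ} (h : ∀ v, c ≤ f (x + R v) + t * ‖v‖) :
    c ≤ infConvR R t f x :=
  le_ciInf h

lemma abs_infConvR_le {C : ℝ} (hC : ∀ y, |f y| ≤ C) (ht : 0 ≤ t) (x : H) :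
    |infConvR R t f x| ≤ C := by
  have hbdd : BddBelow (Set.range f) :=
    ⟨-C, by rintro _ ⟨y, rfl⟩; linarith [neg_abs_le (f y), hC y]⟩
  refine abs_le.2 ⟨le_infConvR R fun v => ?_, ?_⟩
  · linarith [neg_abs_le (f (x + R v)), hC (x + R v), mul_nonneg ht (norm_nonneg v)]
  · exact (infConvR_le_self R hbdd ht x).trans ((le_abs_self _).trans (hC x))

lemma infConvR_add_le (hf : BddBelow (Set.range f)) (ht : 0 ≤ t) (x w : H) :
    infConvR R t f (x + R w) ≤ infConvR R t f x + t * ‖w‖ := by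
  suffices infConvR R t f (x + R w) - t * ‖w‖ ≤ infConvR R t f x by linarith
  refine le_infConvR R fun u => ?_
  have h := infConvR_le R hf ht (x + R w) (u - w)
  rw [map_sub, add_add_sub_cancel] at h
  nlinarith [norm_sub_le u w]

lemma abs_infConvR_add_sub_le (hf : BddBelow (Set.range f)) (ht : 0 ≤ t) (x w : H) :
    |infConvR R t f (x + R w) - infConvR R t f x| ≤ t * ‖w‖ := by
  have h := infConvR_add_le R hf ht (x + R w) (-w)
  rw [map_neg, add_neg_cancel_right, norm_neg] at h
  rw [abs_sub_le_iff]
  constructor <;> linarith [infConvR_add_le R hf ht x w]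

lemma uniformContinuous_infConvR (hf : BddBelow (Set.range f)) (ht : 0 ≤ t)
    (hfu : UniformContinuous f) : UniformContinuous (infConvR R t f) := by
  rw [Metric.uniformContinuous_iff] at hfu ⊢
  intro ε hε
  obtain ⟨δ, hδ, hfδ⟩ := hfu (ε / 2) (half_pos hε)
  have hle : ∀ x y : H, dist x y < δ → infConvR R t f x ≤ infConvR R t f y + ε / 2 := by
    intro x y hxy
    suffices infConvR R t f x - ε / 2 ≤ infConvR R t f y by linarith
    refine le_infConvR R fun v => ?_
    have hshift : |f (x + R v) - f (y + R v)| < ε / 2 := hfδ (by rwa [dist_add_right])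
    linarith [infConvR_le R hf ht x v, (abs_lt.1 hshift).2]
  refine ⟨δ, hδ, fun {x y} hxy => ?_⟩
  rw [Real.dist_eq, abs_lt]
  constructor <;> linarith [hle x y hxy, hle y x (by rwa [dist_comm])]

lemma sub_le_infConvR_of_holder {α L r : ℝ} (hα : α ∈ Set.Ioo (0 : ℝ) 1) (hL : 0 ≤ L)
    (hr : 0 < r) (hfL : ∀ x v : H, |f (x + R v) - f x| ≤ L * ‖v‖ ^ α) (x : H) :
    f x - L * r ^ α ≤ infConvR R (L * r ^ (α - 1)) f x := by
  refine le_infConvR R fun v => ?_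
  have young := Real.rpow_le_rpow_add_rpow_sub_one_mul hα.1.le hα.2.le hr (norm_nonneg v)
  nlinarith [(abs_le.1 (hfL x v)).1, mul_le_mul_of_nonneg_left young hL]

end InfConvolution

section SupNorm

variable {H : Type*} {f : H → ℝ}

lemma supNorm_nonneg (f : H → ℝ) : 0 ≤ supNorm f :=
  Real.sSup_nonneg (by rintro _ ⟨x, rfl⟩; positivity)

lemma supNorm_le {C : ℝ} (hC : 0 ≤ C) (h : ∀ x, |f x| ≤ C) : supNorm f ≤ C :=
  Real.sSup_le (by rintro _ ⟨x, rfl⟩; exact h x) hC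

lemma abs_le_supNorm (h : ∃ C : ℝ, ∀ x, |f x| ≤ C) (x : H) : |f x| ≤ supNorm f := by
  obtain ⟨C, hC⟩ := h
  exact le_csSup ⟨C, by rintro _ ⟨y, rfl⟩; exact hC y⟩ ⟨x, rfl⟩

lemma supNorm_zero : supNorm (fun _ : H => (0 : ℝ)) = 0 :=
  le_antisymm (supNorm_le le_rfl (by simp)) (supNorm_nonneg _)

end SupNorm

lemma IsBUC.bddBelow_range {H : Type*} [NormedAddCommGroup H] {f : H → ℝ} (hf : IsBUC f) :
    BddBelow (Set.range f) := by
  obtain ⟨⟨C, hC⟩, -⟩ := hf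
  exact ⟨-C, by rintro _ ⟨x, rfl⟩; linarith [neg_abs_le (f x), hC x]⟩

lemma isBUC_zero {H : Type*} [NormedAddCommGroup H] : IsBUC (fun _ : H => (0 : ℝ)) :=
  ⟨⟨0, by simp⟩, uniformContinuous_const⟩

section Seminorms

variable {H : Type*} [NormedAddCommGroup H] [InnerProductSpace ℝ H] {R : H →L[ℝ] H}
  {f : H → ℝ}

lemma holderSeminormR_one (R : H →L[ℝ] H) (f : H → ℝ) :
    holderSeminormR R 1 f = lipSeminormR R f := by
  simp only [holderSeminormR, lipSeminormR, Real.rpow_one]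

lemma holderSeminormR_nonneg (R : H →L[ℝ] H) (α : ℝ) (f : H → ℝ) :
    0 ≤ holderSeminormR R α f :=
  Real.sSup_nonneg (by rintro _ ⟨x, v, -, rfl⟩; positivity)

lemma holderSeminormR_le {α L : ℝ} (hL : 0 ≤ L)
    (h : ∀ x v : H, |f (x + R v) - f x| ≤ L * ‖v‖ ^ α) : holderSeminormR R α f ≤ L := by
  refine Real.sSup_le ?_ hL
  rintro _ ⟨x, v, hv, rfl⟩
  rw [div_le_iff₀ (Real.rpow_pos_of_pos (norm_pos_iff.mpr hv) α)]
  exact h x v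

lemma abs_sub_le_holderSeminormR {α : ℝ} (hα : 0 < α)
    (h : ∃ L : ℝ, ∀ x v : H, |f (x + R v) - f x| ≤ L * ‖v‖ ^ α) (x v : H) :
    |f (x + R v) - f x| ≤ holderSeminormR R α f * ‖v‖ ^ α := by
  obtain ⟨L, hL⟩ := h
  rcases eq_or_ne v 0 with rfl | hv
  · simp [Real.zero_rpow hα.ne']
  have hpos : 0 < ‖v‖ ^ α := Real.rpow_pos_of_pos (norm_pos_iff.mpr hv) α
  rw [← div_le_iff₀ hpos]
  refine le_csSup ⟨L, ?_⟩ ⟨x, v, hv, rfl⟩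
  rintro _ ⟨y, w, hw, rfl⟩
  rw [div_le_iff₀ (Real.rpow_pos_of_pos (norm_pos_iff.mpr hw) α)]
  exact hL y w

lemma lipSeminormR_nonneg (R : H →L[ℝ] H) (f : H → ℝ) : 0 ≤ lipSeminormR R f :=
  holderSeminormR_one R f ▸ holderSeminormR_nonneg R 1 f

lemma lipSeminormR_le {L : ℝ} (hL : 0 ≤ L) (h : ∀ x v : H, |f (x + R v) - f x| ≤ L * ‖v‖) :
    lipSeminormR R f ≤ L :=
  holderSeminormR_one R f ▸ holderSeminormR_le hL (by simpa only [Real.rpow_one] using h)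

lemma abs_sub_le_lipSeminormR (hf : IsLipbR R f) (x v : H) :
    |f (x + R v) - f x| ≤ lipSeminormR R f * ‖v‖ := by
  simpa only [holderSeminormR_one, Real.rpow_one] using
    abs_sub_le_holderSeminormR one_pos (by simpa only [Real.rpow_one] using hf.2) x v

lemma lipSeminormR_zero (R : H →L[ℝ] H) : lipSeminormR R (fun _ : H => (0 : ℝ)) = 0 :=
  le_antisymm (lipSeminormR_le le_rfl (by simp)) (lipSeminormR_nonneg _ _)

lemma isLipbR_zero (R : H →L[ℝ] H) : IsLipbR R (fun _ : H => (0 : ℝ)) :=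
  ⟨isBUC_zero, 0, by simp⟩

end Seminorms

section KFunctional

variable {H : Type*} [NormedAddCommGroup H] [InnerProductSpace ℝ H] {R : H →L[ℝ] H}
  {r : ℝ} {f : H → ℝ}

lemma Kfunctional_le_of_eq_add (hr : 0 ≤ r) {a b : H → ℝ} (hab : ∀ x, f x = a x + b x)
    (ha : IsBUC a) (hb : IsLipbR R b) :
    Kfunctional R r f ≤ supNorm a + r * (supNorm b + lipSeminormR R b) := by
  refine csInf_le ⟨0, ?_⟩ ⟨a, b, hab, ha, hb, rfl⟩
  rintro _ ⟨a', b', -, -, -, rfl⟩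
  have := lipSeminormR_nonneg R b'
  have := supNorm_nonneg b'
  have := supNorm_nonneg a'
  positivity

lemma le_Kfunctional (hf : IsBUC f) {c : ℝ}
    (hc : ∀ a b : H → ℝ, (∀ x, f x = a x + b x) → IsBUC a → IsLipbR R b →
      c ≤ supNorm a + r * (supNorm b + lipSeminormR R b)) :
    c ≤ Kfunctional R r f := by
  refine le_csInf ⟨_, f, fun _ => 0, by simp, hf, isLipbR_zero R, rfl⟩ ?_
  rintro _ ⟨a, b, hab, ha, hb, rfl⟩
  exact hc a b hab ha hb

lemma Kfunctional_le_supNorm (hr : 0 ≤ r) (hf : IsBUC f) : Kfunctional R r f ≤ supNorm f := by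
  simpa [supNorm_zero, lipSeminormR_zero] using
    Kfunctional_le_of_eq_add (R := R) hr (b := fun _ => 0) (by simp) hf (isLipbR_zero R)

lemma isLipbR_infConvR (hf : IsBUC f) {t : ℝ} (ht : 0 ≤ t) : IsLipbR R (infConvR R t f) :=
  ⟨⟨⟨supNorm f, abs_infConvR_le R (abs_le_supNorm hf.1) ht⟩,
      uniformContinuous_infConvR R hf.bddBelow_range ht hf.2⟩,
    t, abs_infConvR_add_sub_le R hf.bddBelow_range ht⟩

lemma Kfunctional_le_rpow_mul_of_holder {α L : ℝ} (hα : α ∈ Set.Ioo (0 : ℝ) 1) (hr : 0 < r)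
    (hf : IsBUC f) (hL : 0 ≤ L) (hfL : ∀ x v : H, |f (x + R v) - f x| ≤ L * ‖v‖ ^ α) :
    Kfunctional R r f ≤ r ^ α * (supNorm f + 2 * L) := by
  have hf₀ := supNorm_nonneg f
  rcases le_or_gt 1 r with h1r | hr1
  · calc Kfunctional R r f ≤ supNorm f := Kfunctional_le_supNorm hr.le hf
      _ ≤ r ^ α * (supNorm f + 2 * L) := by
        nlinarith [Real.one_le_rpow h1r hα.1.le]
  set t := L * r ^ (α - 1)
  have ht : 0 ≤ t := mul_nonneg hL (Real.rpow_nonneg hr.le _)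
  set b := infConvR R t f
  have hb := isLipbR_infConvR (R := R) hf ht
  have ha (x : H) : |f x - b x| ≤ L * r ^ α :=
    abs_le.2 ⟨by linarith [infConvR_le_self R hf.bddBelow_range ht x,
        mul_nonneg hL (Real.rpow_nonneg hr.le α)],
      by linarith [sub_le_infConvR_of_holder R hα hL hr hfL x]⟩
  have hrt : r * t = L * r ^ α := by
    simp only [t, Real.rpow_sub_one hr.ne']
    field_simp
  calc Kfunctional R r f ≤ supNorm (fun x => f x - b x) + r * (supNorm b + lipSeminormR R b) :=
        Kfunctional_le_of_eq_add hr.le (fun x => (sub_add_cancel (f x) (b x)).symm)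
          ⟨⟨_, ha⟩, hf.2.sub hb.1.2⟩ hb
    _ ≤ L * r ^ α + r * (supNorm f + t) := by
        gcongr
        · exact supNorm_le (by positivity) ha
        · exact supNorm_le hf₀ (abs_infConvR_le R (abs_le_supNorm hf.1) ht)
        · exact lipSeminormR_le ht (abs_infConvR_add_sub_le R hf.bddBelow_range ht)
    _ ≤ r ^ α * (supNorm f + 2 * L) := by
        nlinarith [Real.self_le_rpow_of_le_one hr.le hr1.le hα.2.le]

lemma rpow_neg_mul_Kfunctional_le_of_holder {α L : ℝ} (hα : α ∈ Set.Ioo (0 : ℝ) 1)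
    (hr : 0 < r) (hf : IsBUC f) (hL : 0 ≤ L)
    (hfL : ∀ x v : H, |f (x + R v) - f x| ≤ L * ‖v‖ ^ α) :
    r ^ (-α) * Kfunctional R r f ≤ supNorm f + 2 * L := by
  rw [Real.rpow_neg hr.le, inv_mul_le_iff₀ (Real.rpow_pos_of_pos hr α)]
  exact Kfunctional_le_rpow_mul_of_holder hα hr hf hL hfL

lemma supNorm_le_Kfunctional_one (hf : IsBUC f) : supNorm f ≤ Kfunctional R 1 f := by
  refine le_Kfunctional hf fun a b hab ha hb => ?_
  have hsum : supNorm f ≤ supNorm a + supNorm b :=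
    supNorm_le (add_nonneg (supNorm_nonneg a) (supNorm_nonneg b)) fun x => by
      rw [hab x]
      exact (abs_add_le _ _).trans
        (add_le_add (abs_le_supNorm ha.1 x) (abs_le_supNorm hb.1.1 x))
  linarith [lipSeminormR_nonneg R b]

lemma abs_sub_le_two_mul_Kfunctional (hf : IsBUC f) (x v : H) :
    |f (x + R v) - f x| ≤ 2 * Kfunctional R ‖v‖ f := by
  suffices |f (x + R v) - f x| / 2 ≤ Kfunctional R ‖v‖ f by linarith
  refine le_Kfunctional hf fun a b hab ha hb => ?_
  have hsplit : f (x + R v) - f x = (a (x + R v) - a x) + (b (x + R v) - b x) := by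
    rw [hab, hab]; ring
  have hΔ : |f (x + R v) - f x| ≤ 2 * supNorm a + lipSeminormR R b * ‖v‖ := by
    rw [hsplit]
    refine (abs_add_le _ _).trans (add_le_add ?_ (abs_sub_le_lipSeminormR hb x v))
    linarith [abs_sub (a (x + R v)) (a x), abs_le_supNorm ha.1 (x + R v), abs_le_supNorm ha.1 x]
  nlinarith [mul_nonneg (norm_nonneg v) (supNorm_nonneg b),
    mul_nonneg (norm_nonneg v) (lipSeminormR_nonneg R b)]

end KFunctional

section InterpNorm

variable {H : Type*} [NormedAddCommGroup H] [InnerProductSpace ℝ H] {R : H →L[ℝ] H}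
  {α : ℝ} {f : H → ℝ}

lemma Kfunctional_le_rpow_mul_interpNorm
    (hB : BddAbove {s : ℝ | ∃ r : ℝ, 0 < r ∧ s = r ^ (-α) * Kfunctional R r f})
    {r : ℝ} (hr : 0 < r) : Kfunctional R r f ≤ r ^ α * interpNorm R α f := by
  rw [← inv_mul_le_iff₀ (Real.rpow_pos_of_pos hr α), ← Real.rpow_neg hr.le]
  exact le_csSup hB ⟨r, hr, rfl⟩

lemma supNorm_le_interpNorm (hf : IsBUC f)
    (hB : BddAbove {s : ℝ | ∃ r : ℝ, 0 < r ∧ s = r ^ (-α) * Kfunctional R r f}) :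
    supNorm f ≤ interpNorm R α f := by
  simpa using
    (supNorm_le_Kfunctional_one hf).trans (Kfunctional_le_rpow_mul_interpNorm hB one_pos)

lemma abs_sub_le_two_mul_interpNorm (hα : 0 < α) (hf : IsBUC f)
    (hB : BddAbove {s : ℝ | ∃ r : ℝ, 0 < r ∧ s = r ^ (-α) * Kfunctional R r f}) (x v : H) :
    |f (x + R v) - f x| ≤ 2 * interpNorm R α f * ‖v‖ ^ α := by
  rcases eq_or_ne v 0 with rfl | hv
  · simp [Real.zero_rpow hα.ne']
  calc |f (x + R v) - f x| ≤ 2 * Kfunctional R ‖v‖ f := abs_sub_le_two_mul_Kfunctional hf x v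
    _ ≤ 2 * (‖v‖ ^ α * interpNorm R α f) := by
      gcongr; exact Kfunctional_le_rpow_mul_interpNorm hB (norm_pos_iff.mpr hv)
    _ = 2 * interpNorm R α f * ‖v‖ ^ α := by ring

lemma interpNorm_le_of_holder (hα : α ∈ Set.Ioo (0 : ℝ) 1) (hf : IsBUC f) {L : ℝ} (hL : 0 ≤ L)
    (hfL : ∀ x v : H, |f (x + R v) - f x| ≤ L * ‖v‖ ^ α) :
    BddAbove {s : ℝ | ∃ r : ℝ, 0 < r ∧ s = r ^ (-α) * Kfunctional R r f} ∧
      interpNorm R α f ≤ supNorm f + 2 * L := by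
  have hbound : ∀ s ∈ {s : ℝ | ∃ r : ℝ, 0 < r ∧ s = r ^ (-α) * Kfunctional R r f},
      s ≤ supNorm f + 2 * L := by
    rintro _ ⟨r, hr, rfl⟩
    exact rpow_neg_mul_Kfunctional_le_of_holder hα hr hf hL hfL
  exact ⟨⟨_, hbound⟩, Real.sSup_le hbound (by linarith [supNorm_nonneg f])⟩

end InterpNorm

theorem statement17_general
    {H : Type*} [NormedAddCommGroup H] [InnerProductSpace ℝ H]
    (R : H →L[ℝ] H)
    (α : ℝ) (hα : α ∈ Set.Ioo (0 : ℝ) 1) :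
    ∃ C₁ C₂ : ℝ, 0 < C₁ ∧ 0 < C₂ ∧
      ∀ f : H → ℝ, IsBUC f →
        (((∃ L : ℝ, 0 ≤ L ∧ ∀ x v : H, |f (x + R v) - f x| ≤ L * ‖v‖ ^ α) ↔
            BddAbove {s : ℝ | ∃ r : ℝ, 0 < r ∧ s = r ^ (-α) * Kfunctional R r f}) ∧
          ((∃ L : ℝ, 0 ≤ L ∧ ∀ x v : H, |f (x + R v) - f x| ≤ L * ‖v‖ ^ α) →
            interpNorm R α f ≤ C₁ * (supNorm f + holderSeminormR R α f) ∧
              supNorm f + holderSeminormR R α f ≤ C₂ * interpNorm R α f)) := by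
  refine ⟨2, 3, by norm_num, by norm_num, fun f hf => ⟨⟨?_, fun hB => ?_⟩, ?_⟩⟩
  · rintro ⟨L, hL, hfL⟩
    exact (interpNorm_le_of_holder hα hf hL hfL).1
  · have := supNorm_le_interpNorm hf hB
    exact ⟨2 * interpNorm R α f, by linarith [supNorm_nonneg f],
      abs_sub_le_two_mul_interpNorm hα.1 hf hB⟩
  rintro ⟨L, -, hfL⟩
  have hholder := abs_sub_le_holderSeminormR hα.1 ⟨L, hfL⟩
  have hseminorm := holderSeminormR_nonneg R α f
  obtain ⟨hB, hinterp⟩ := interpNorm_le_of_holder hα hf hseminorm hholder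
  have hsup := supNorm_le_interpNorm hf hB
  have hseminorm_le := holderSeminormR_le (by linarith [supNorm_nonneg f])
    (abs_sub_le_two_mul_interpNorm hα.1 hf hB)
  constructor <;> linarith [supNorm_nonneg f]

/-- For `α ∈ (0,1)`, the real interpolation space
`(BUC(H), Lip_{b,R}(H))_{α,∞}` (K-method) coincides with `BUC^α_R(H)`, with equivalence of
norms: a bounded uniformly continuous `f` is `R`-Hölder of exponent `α` iff
`sup_{r>0} r^{−α}K(r,f) < ∞`, and there are constants `C₁, C₂ > 0` with
`‖f‖_{(·,·)_{α,∞}} ≤ C₁ ‖f‖_{BUC^α_R}` and `‖f‖_{BUC^α_R} ≤ C₂ ‖f‖_{(·,·)_{α,∞}}` for all such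
`f`. -/
theorem statement17
    {H : Type*} [NormedAddCommGroup H] [InnerProductSpace ℝ H] [CompleteSpace H]
    [TopologicalSpace.SeparableSpace H]
    (R : H →L[ℝ] H) (hR : IsSelfAdjoint R)
    (α : ℝ) (hα : α ∈ Set.Ioo (0 : ℝ) 1) :
    ∃ C₁ C₂ : ℝ, 0 < C₁ ∧ 0 < C₂ ∧
      ∀ f : H → ℝ, IsBUC f →
        (((∃ L : ℝ, 0 ≤ L ∧ ∀ x v : H, |f (x + R v) - f x| ≤ L * ‖v‖ ^ α) ↔
            BddAbove {s : ℝ | ∃ r : ℝ, 0 < r ∧ s = r ^ (-α) * Kfunctional R r f}) ∧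
          ((∃ L : ℝ, 0 ≤ L ∧ ∀ x v : H, |f (x + R v) - f x| ≤ L * ‖v‖ ^ α) →
            interpNorm R α f ≤ C₁ * (supNorm f + holderSeminormR R α f) ∧
              supNorm f + holderSeminormR R α f ≤ C₂ * interpNorm R α f)) :=
  statement17_general R α hα
end
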